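/- Fix n ≥ 1, 1 ≤ i ≤ n, and d ≥ 2, and let i₁, …, i_d ∈ {1, …, n}. Let S be the (finite) set of all i-successors of the simple commutator [x_{i₁}, …, x_{i_d}], where an i-successor is any simple commutator [x_{j₁}, …, x_{j_d}] in F_{n+1} obtained by replacing each index i_k with i_k > i by i_k + 1, each index i_k with i_k < i by itself, and each index i_k equal to i, independently, by either i or i+1. Then θ_i([x_{i₁}, …, x_{i_d}]) is congruent, modulo γ_{d+1}(F_{n+1}), to the product of all elements of S (in any fixed order; the product is well defined modulo γ_{d+1}(F_{n+1}) since γ_d(F_{n+1})/γ_{d+1}(F_{n+1}) is abelian). -/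

import Mathlib

/-- The commutator `[a,b] = a⁻¹ b⁻¹ a b`. -/
def grpComm {G : Type*} [Group G] (a b : G) : G := a⁻¹ * b⁻¹ * a * b

/-- `simpleComm a [b₁, …, bₘ] = [a, b₁, …, bₘ]`, the left-normed simple commutator. -/
def simpleComm {G : Type*} [Group G] : G → List G → G
  | a, [] => a
  | a, b :: l => simpleComm (grpComm a b) l

/-- The simple commutator `[a₁, …, a_d]` of a nonempty list. -/
def simpleCommList {G : Type*} [Group G] : List G → G
  | [] => 1
  | a :: l => simpleComm a l

/-- The homomorphism `θᵢ : Fₙ → Fₙ₊₁` between free groups determined on the free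
generators by `θᵢ(xₖ) = xₖ` for `k < i`, `θᵢ(xᵢ) = xᵢ xᵢ₊₁`, and `θᵢ(xₖ) = xₖ₊₁`
for `k > i`. -/
def theta (n : ℕ) (i : Fin n) : FreeGroup (Fin n) →* FreeGroup (Fin (n + 1)) :=
  FreeGroup.lift fun k =>
    if k < i then FreeGroup.of k.castSucc
    else if k = i then FreeGroup.of i.castSucc * FreeGroup.of i.succ
    else FreeGroup.of k.succ

/-- `j : Fin d → Fin (n+1)` is an index tuple of an `i`-successor of the index tuple
`idx : Fin d → Fin n`: each index `> i` is shifted up by one, each index `< i` is kept,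
and each index equal to `i` becomes, independently, either `i` or `i+1`. -/
def IsISuccIdx {n d : ℕ} (i : Fin n) (idx : Fin d → Fin n) (j : Fin d → Fin (n + 1)) :
    Prop :=
  ∀ t : Fin d,
    (idx t < i → j t = (idx t).castSucc) ∧
    (i < idx t → j t = (idx t).succ) ∧
    (idx t = i → j t = i.castSucc ∨ j t = i.succ)

section Helpers
variable {G : Type*} [Group G]

lemma simpleComm_cons (a b : G) (l : List G) :
    simpleComm a (b :: l) = simpleComm (grpComm a b) l := rfl

lemma commElem_mem {k : ℕ} {x : G} (hx : x ∈ (⊤ : Subgroup G).lowerCentralSeries k) (y : G) :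
    x * y * x⁻¹ * y⁻¹ ∈ (⊤ : Subgroup G).lowerCentralSeries (k + 1) := by
  have h : (⊤ : Subgroup G).lowerCentralSeries (k + 1) = ⁅(⊤ : Subgroup G).lowerCentralSeries k, (⊤ : Subgroup G)⁆ := rfl
  rw [h]
  exact commutatorElement_def x y ▸
    Subgroup.commutator_mem_commutator hx (Subgroup.mem_top y)

lemma grpComm_mem_succ {k : ℕ} {a : G} (ha : a ∈ (⊤ : Subgroup G).lowerCentralSeries k) (b : G) :
    grpComm a b ∈ (⊤ : Subgroup G).lowerCentralSeries (k + 1) := by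
  have := commElem_mem (inv_mem ha) b⁻¹
  simpa [grpComm] using this

lemma mul_inv_mem_trans {S : Subgroup G} {x y z : G}
    (h1 : x * y⁻¹ ∈ S) (h2 : y * z⁻¹ ∈ S) : x * z⁻¹ ∈ S := by
  have h : x * z⁻¹ = (x * y⁻¹) * (y * z⁻¹) := by group
  rw [h]; exact mul_mem h1 h2

lemma mul_left_congr_mem {k : ℕ} {x y : G} (c : G)
    (h : x * y⁻¹ ∈ (⊤ : Subgroup G).lowerCentralSeries k) :
    (c * x) * (c * y)⁻¹ ∈ (⊤ : Subgroup G).lowerCentralSeries k := by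
  have he : (c * x) * (c * y)⁻¹ = c * (x * y⁻¹) * c⁻¹ := by group
  rw [he]
  exact (Subgroup.lowerCentralSeries_normal ⊤ k).conj_mem _ h c

lemma simpleComm_mem {k : ℕ} (l : List G) {a : G} (ha : a ∈ (⊤ : Subgroup G).lowerCentralSeries k) :
    simpleComm a l ∈ (⊤ : Subgroup G).lowerCentralSeries (k + l.length) := by
  induction l generalizing k a with
  | nil => simpa [simpleComm] using ha
  | cons c l ih =>
    have h2 : k + (c :: l).length = (k + 1) + l.length := by
      simp [List.length_cons]; omega
    rw [h2, simpleComm_cons]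
    exact ih (grpComm_mem_succ ha c)

lemma simpleComm_one (l : List G) : simpleComm (1 : G) l = 1 := by
  induction l with
  | nil => rfl
  | cons c l ih => rw [simpleComm_cons]; simpa [grpComm] using ih

-- Lemma A : stability
lemma simpleComm_mul_right_mem (l : List G) :
    ∀ (k : ℕ) (h z : G), h ∈ (⊤ : Subgroup G).lowerCentralSeries k → z ∈ (⊤ : Subgroup G).lowerCentralSeries (k + 1) →
    simpleComm (h * z) l * (simpleComm h l)⁻¹ ∈ (⊤ : Subgroup G).lowerCentralSeries (k + 1 + l.length) := by
  induction l with
  | nil =>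
    intro k h z _ hz
    have := (Subgroup.lowerCentralSeries_normal ⊤ (k + 1)).conj_mem z hz h
    simpa [simpleComm] using this
  | cons c l ih =>
    intro k h z hh hz
    have key : grpComm (h * z) c = grpComm h c * (grpComm (grpComm h c) z * grpComm z c) := by
      simp only [grpComm]; group
    have hz' : grpComm (grpComm h c) z * grpComm z c ∈ (⊤ : Subgroup G).lowerCentralSeries (k + 1 + 1) :=
      mul_mem (grpComm_mem_succ (grpComm_mem_succ hh c) z) (grpComm_mem_succ hz c)
    have hmain := ih (k + 1) (grpComm h c) _ (grpComm_mem_succ hh c) hz'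
    rw [← key] at hmain
    have harith : k + 1 + (c :: l).length = k + 1 + 1 + l.length := by
      simp [List.length_cons]; omega
    rw [harith, simpleComm_cons, simpleComm_cons]
    exact hmain

-- Lemma B : first-slot multiplicativity
lemma simpleComm_mul_mem (l : List G) :
    ∀ (k : ℕ) (a b : G), a ∈ (⊤ : Subgroup G).lowerCentralSeries k → b ∈ (⊤ : Subgroup G).lowerCentralSeries k →
    simpleComm (a * b) l * (simpleComm a l * simpleComm b l)⁻¹ ∈
      (⊤ : Subgroup G).lowerCentralSeries (k + 1 + l.length) := by
  induction l with
  | nil =>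
    intro k a b _ _
    simp only [simpleComm]
    have he : a * b * (b⁻¹ * a⁻¹) = (1 : G) := by group
    rw [mul_inv_rev, he]
    exact one_mem _
  | cons c l ih =>
    intro k a b ha hb
    set u := grpComm a c with hu_def
    set v := grpComm b c with hv_def
    have hu : u ∈ (⊤ : Subgroup G).lowerCentralSeries (k + 1) := grpComm_mem_succ ha c
    have hv : v ∈ (⊤ : Subgroup G).lowerCentralSeries (k + 1) := grpComm_mem_succ hb c
    have key : grpComm (a * b) c = (u * v) * (v⁻¹ * grpComm u b * v) := by
      simp only [hu_def, hv_def, grpComm]; group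
    have hzmem : v⁻¹ * grpComm u b * v ∈ (⊤ : Subgroup G).lowerCentralSeries (k + 1 + 1) := by
      have h1 := grpComm_mem_succ hu b
      have := (Subgroup.lowerCentralSeries_normal ⊤ (k + 1 + 1)).conj_mem _ h1 v⁻¹
      simpa using this
    have stepA := simpleComm_mul_right_mem l (k + 1) (u * v) _ (mul_mem hu hv) hzmem
    rw [← key] at stepA
    have stepB := ih (k + 1) u v hu hv
    have harith : k + 1 + (c :: l).length = k + 1 + 1 + l.length := by
      simp [List.length_cons]; omega
    rw [harith, simpleComm_cons, simpleComm_cons, simpleComm_cons]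
    exact mul_inv_mem_trans stepA stepB

-- Lemma B' : product in the first slot
lemma simpleComm_prod_mem (s : List G) (l : List G) (k : ℕ)
    (hs : ∀ a ∈ s, a ∈ (⊤ : Subgroup G).lowerCentralSeries k) :
    simpleComm s.prod l * ((s.map fun a => simpleComm a l).prod)⁻¹ ∈
      (⊤ : Subgroup G).lowerCentralSeries (k + 1 + l.length) := by
  induction s with
  | nil => simp [simpleComm_one]
  | cons a s ih =>
    have ha := hs a (List.mem_cons_self)
    have hsp : s.prod ∈ (⊤ : Subgroup G).lowerCentralSeries k :=
      list_prod_mem fun x hx => hs x (List.mem_cons_of_mem a hx)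
    rw [List.prod_cons, List.map_cons, List.prod_cons]
    have stepA := simpleComm_mul_mem l k a s.prod ha hsp
    have stepB : (simpleComm a l * simpleComm s.prod l) *
        (simpleComm a l * ((s.map fun a => simpleComm a l).prod))⁻¹ ∈
        (⊤ : Subgroup G).lowerCentralSeries (k + 1 + l.length) :=
      mul_left_congr_mem _ (ih fun x hx => hs x (List.mem_cons_of_mem a hx))
    exact mul_inv_mem_trans stepA stepB

-- Lemma R : product in the second slot of grpComm
lemma grpComm_prod_right_mem (s : List G) (k : ℕ) {a : G} (ha : a ∈ (⊤ : Subgroup G).lowerCentralSeries k) :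
    grpComm a s.prod * ((s.map fun c => grpComm a c).prod)⁻¹ ∈
      (⊤ : Subgroup G).lowerCentralSeries (k + 1 + 1) := by
  induction s with
  | nil => simp [grpComm]
  | cons c s ih =>
    rw [List.prod_cons, List.map_cons, List.prod_cons]
    set u := grpComm a c with hu_def
    set Q := grpComm a s.prod with hQ_def
    set P := (s.map fun c => grpComm a c).prod with hP_def
    have hu : u ∈ (⊤ : Subgroup G).lowerCentralSeries (k + 1) := grpComm_mem_succ ha c
    have hP : P ∈ (⊤ : Subgroup G).lowerCentralSeries (k + 1) := by
      refine list_prod_mem fun x hx => ?_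
      obtain ⟨c', -, rfl⟩ := List.mem_map.1 hx
      exact grpComm_mem_succ ha c'
    have key : grpComm a (c * s.prod) = Q * u * grpComm u s.prod := by
      simp only [hu_def, hQ_def, grpComm]; group
    have expand : grpComm a (c * s.prod) * (u * P)⁻¹ =
        (Q * P⁻¹) * ((P * u) * grpComm u s.prod * (P * u)⁻¹) * (P * u * P⁻¹ * u⁻¹) := by
      rw [key]; group
    rw [expand]
    refine mul_mem (mul_mem ih ?_) (commElem_mem hP u)
    exact (Subgroup.lowerCentralSeries_normal ⊤ (k + 1 + 1)).conj_mem _ (grpComm_mem_succ hu s.prod) (P * u)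

-- Q : permutation invariance of products mod the next term
lemma perm_prod_mem {j : ℕ} : ∀ {x y : List G}, x.Perm y →
    (∀ a ∈ x, a ∈ (⊤ : Subgroup G).lowerCentralSeries j) →
    x.prod * y.prod⁻¹ ∈ (⊤ : Subgroup G).lowerCentralSeries (j + 1) := by
  intro x y h
  induction h with
  | nil => simpa using one_mem _
  | cons a h ih =>
    intro hmem
    simp only [List.prod_cons]
    exact mul_left_congr_mem a (ih fun b hb => hmem b (List.mem_cons_of_mem a hb))
  | swap a b l =>
    intro hmem
    simp only [List.prod_cons]
    have hb : b ∈ (⊤ : Subgroup G).lowerCentralSeries j := hmem b (List.mem_cons_self)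
    have he : b * (a * l.prod) * (a * (b * l.prod))⁻¹ = b * a * b⁻¹ * a⁻¹ := by group
    rw [he]
    exact commElem_mem hb a
  | trans h1 h2 ih1 ih2 =>
    intro hmem
    exact mul_inv_mem_trans (ih1 hmem) (ih2 fun a ha => hmem a (h1.symm.mem_iff.1 ha))

-- P' : pointwise congruence of products
lemma prod_map_congr_mem {α : Type*} {k : ℕ} (s : List α) (f g : α → G)
    (h : ∀ c ∈ s, f c * (g c)⁻¹ ∈ (⊤ : Subgroup G).lowerCentralSeries k) :
    (s.map f).prod * ((s.map g).prod)⁻¹ ∈ (⊤ : Subgroup G).lowerCentralSeries k := by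
  induction s with
  | nil => simpa using one_mem _
  | cons c s ih =>
    simp only [List.map_cons, List.prod_cons]
    have he : f c * (s.map f).prod * (g c * (s.map g).prod)⁻¹ =
        (f c * ((s.map f).prod * ((s.map g).prod)⁻¹) * (f c)⁻¹) * (f c * (g c)⁻¹) := by
      group
    rw [he]
    refine mul_mem ?_ (h c (List.mem_cons_self))
    exact (Subgroup.lowerCentralSeries_normal ⊤ k).conj_mem _
      (ih fun x hx => h x (List.mem_cons_of_mem c hx)) (f c)

end Helpers
section Sections
variable {G : Type*} [Group G]

lemma flatMap_cons_perm {α β : Type*} (l : List β) (x : β → α) (g : β → List α) :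
    (l.flatMap fun b => x b :: g b).Perm (l.map x ++ l.flatMap g) := by
  induction l with
  | nil => simp
  | cons b l ih =>
    simp only [List.flatMap_cons, List.map_cons, List.cons_append]
    refine List.Perm.cons _ (List.Perm.trans (ih.append_left (g b)) ?_)
    rw [← List.append_assoc, ← List.append_assoc]
    exact List.perm_append_comm.append_right _

lemma flatMap_swap_perm {α β γ : Type*} (l₁ : List α) (l₂ : List β) (f : α → β → γ) :
    (l₁.flatMap fun a => l₂.map (f a)).Perm
      (l₂.flatMap fun b => l₁.map fun a => f a b) := by
  induction l₁ with
  | nil => simp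
  | cons a l₁ ih =>
    simp only [List.flatMap_cons]
    refine List.Perm.trans (ih.append_left _) ?_
    exact (flatMap_cons_perm l₂ (fun b => f a b) fun b => l₁.map fun a' => f a' b).symm

lemma sections_cons {α : Type*} (s : List α) (LL : List (List α)) :
    List.sections (s :: LL) = (List.sections LL).flatMap fun t => s.map fun a => a :: t := rfl

lemma sections_nodup {α : Type*} : ∀ (LL : List (List α)), (∀ s ∈ LL, s.Nodup) →
    (List.sections LL).Nodup
  | [], _ => by simp [List.sections]
  | s :: LL, h => by
    rw [sections_cons, List.nodup_flatMap]
    constructor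
    · intro t _
      exact (h s (List.mem_cons_self)).map fun a b hab => (List.cons.injEq _ _ _ _ ▸ hab).1
    · have hnd := sections_nodup LL fun x hx => h x (List.mem_cons_of_mem s hx)
      refine hnd.imp ?_
      intro t₁ t₂ hne
      rw [Function.onFun, List.disjoint_left]
      rintro x hx₁ hx₂
      obtain ⟨a, -, rfl⟩ := List.mem_map.1 hx₁
      obtain ⟨b, -, heq⟩ := List.mem_map.1 hx₂
      exact hne ((List.cons.injEq _ _ _ _ ▸ heq).2).symm

lemma prod_flatMap {α : Type*} (l : List α) (f : α → List G) :
    (l.flatMap f).prod = (l.map fun a => (f a).prod).prod := by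
  rw [List.flatMap, List.prod_flatten, List.map_map]
  rfl

-- Lemma N
lemma simpleComm_sections_mem (LL : List (List G)) :
    ∀ (k : ℕ) (a : G), a ∈ (⊤ : Subgroup G).lowerCentralSeries k →
    simpleComm a (LL.map List.prod) *
      (((List.sections LL).map fun t => simpleComm a t).prod)⁻¹ ∈
      (⊤ : Subgroup G).lowerCentralSeries (k + 1 + LL.length) := by
  induction LL with
  | nil =>
    intro k a _
    show simpleComm a [] * (List.prod (List.map _ [[]]))⁻¹ ∈ _
    simp only [simpleComm, List.map_cons, List.map_nil, List.prod_cons, List.prod_nil, mul_one]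
    simpa using one_mem _
  | cons s LL ih =>
    intro k a ha
    set rest := LL.map List.prod with hrest
    have hlen : rest.length = LL.length := by simp [hrest]
    -- step 1 : replace grpComm a s.prod by P times an error term
    set P := (s.map fun c => grpComm a c).prod with hP_def
    have hP : P ∈ (⊤ : Subgroup G).lowerCentralSeries (k + 1) := by
      refine list_prod_mem fun x hx => ?_
      obtain ⟨c', -, rfl⟩ := List.mem_map.1 hx
      exact grpComm_mem_succ ha c'
    have hz : P⁻¹ * grpComm a s.prod ∈ (⊤ : Subgroup G).lowerCentralSeries (k + 1 + 1) := by
      have h1 := grpComm_prod_right_mem s k ha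
      have he : P⁻¹ * grpComm a s.prod = P⁻¹ * (grpComm a s.prod * P⁻¹) * P⁻¹⁻¹ := by group
      rw [he]
      exact (Subgroup.lowerCentralSeries_normal ⊤ _).conj_mem _ h1 P⁻¹
    have stepA := simpleComm_mul_right_mem rest (k + 1) P _ hP hz
    rw [show P * (P⁻¹ * grpComm a s.prod) = grpComm a s.prod by group] at stepA
    -- step 2 : expand P as a product in the first slot
    have stepB := simpleComm_prod_mem (s.map fun c => grpComm a c) rest (k + 1)
      (by rintro x hx; obtain ⟨c', -, rfl⟩ := List.mem_map.1 hx; exact grpComm_mem_succ ha c')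
    rw [← hP_def, List.map_map] at stepB
    -- step 3 : expand each factor by the inductive hypothesis
    have stepC := prod_map_congr_mem (k := k + 1 + 1 + rest.length) s
      (fun c => simpleComm (grpComm a c) rest)
      (fun c => ((List.sections LL).map fun t => simpleComm (grpComm a c) t).prod)
      (fun c _ => by rw [hlen]; exact ih (k + 1) (grpComm a c) (grpComm_mem_succ ha c))
    have comp_eq : ((fun a_1 => simpleComm a_1 rest) ∘ fun c => grpComm a c) =
        fun c => simpleComm (grpComm a c) rest := rfl
    rw [comp_eq] at stepB
    -- step 4 : reorganize the double product via a permutation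
    have hflat : (s.map fun c =>
          ((List.sections LL).map fun t => simpleComm (grpComm a c) t).prod).prod =
        (s.flatMap fun c => (List.sections LL).map fun t => simpleComm (grpComm a c) t).prod := by
      rw [prod_flatMap]
    have hperm : (s.flatMap fun c =>
          (List.sections LL).map fun t => simpleComm (grpComm a c) t).Perm
        ((List.sections (s :: LL)).map fun t => simpleComm a t) := by
      have h1 : ((List.sections (s :: LL)).map fun t => simpleComm a t) =
          (List.sections LL).flatMap fun t => s.map fun c => simpleComm (grpComm a c) t := by
        rw [sections_cons, List.map_flatMap]
        congr 1
        funext t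
        rw [List.map_map]
        rfl
      rw [h1]
      exact flatMap_swap_perm s (List.sections LL) fun c t => simpleComm (grpComm a c) t
    have stepD := perm_prod_mem (j := k + 1 + LL.length) hperm ?_
    · -- chain everything
      have harith : k + 1 + (s :: LL).length = k + 1 + 1 + rest.length := by
        simp [hlen]; omega
      rw [harith]
      show simpleComm a (List.map List.prod (s :: LL)) * _ ∈ _
      rw [List.map_cons, simpleComm_cons]
      refine mul_inv_mem_trans stepA (mul_inv_mem_trans stepB ?_)
      refine mul_inv_mem_trans stepC ?_
      rw [hflat]
      have : k + 1 + 1 + rest.length = (k + 1 + LL.length) + 1 := by simp [hlen]; omega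
      rw [this]
      exact stepD
    · rintro x hx
      obtain ⟨c, -, hx2⟩ := List.mem_flatMap.1 hx
      obtain ⟨t, ht, rfl⟩ := List.mem_map.1 hx2
      have hlent : t.length = LL.length := List.mem_sections_length ht
      have := simpleComm_mem t (grpComm_mem_succ ha c)
      rwa [hlent] at this

end Sections
section Main
variable {G : Type*} [Group G]

lemma simpleCommList_cons (a : G) (l : List G) :
    simpleCommList (a :: l) = simpleComm a l := rfl

lemma simpleCommList_mem {m : ℕ} (t : List G) (ht : t.length = m + 1) :
    simpleCommList t ∈ (⊤ : Subgroup G).lowerCentralSeries m := by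
  cases t with
  | nil => simp at ht
  | cons a t =>
    rw [simpleCommList_cons]
    have h1 : t.length = m := by simpa using ht
    have := simpleComm_mem (k := 0) t (Subgroup.mem_top a)
    rwa [zero_add, h1] at this

-- Lemma M
lemma simpleCommList_sections_mem (LL : List (List G)) (hne : LL ≠ []) :
    simpleCommList (LL.map List.prod) *
      (((List.sections LL).map simpleCommList).prod)⁻¹ ∈
      (⊤ : Subgroup G).lowerCentralSeries LL.length := by
  cases LL with
  | nil => exact absurd rfl hne
  | cons s LL =>
    set rest := LL.map List.prod with hrest
    have hlen : rest.length = LL.length := by simp [hrest]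
    rw [List.map_cons, simpleCommList_cons]
    have stepA := simpleComm_prod_mem s rest 0 (fun a _ => Subgroup.mem_top a)
    have stepB := prod_map_congr_mem (k := 0 + 1 + rest.length) s
      (fun a => simpleComm a rest)
      (fun a => ((List.sections LL).map fun t => simpleComm a t).prod)
      (fun a _ => by
        have h0 := simpleComm_sections_mem LL 0 a (Subgroup.mem_top a)
        rw [hlen]; exact h0)
    have hflat : (s.map fun a =>
          ((List.sections LL).map fun t => simpleComm a t).prod).prod =
        (s.flatMap fun a => (List.sections LL).map fun t => simpleComm a t).prod := by
      rw [prod_flatMap]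
    have hperm : (s.flatMap fun a =>
          (List.sections LL).map fun t => simpleComm a t).Perm
        ((List.sections (s :: LL)).map simpleCommList) := by
      have h1 : ((List.sections (s :: LL)).map simpleCommList) =
          (List.sections LL).flatMap fun t => s.map fun a => simpleComm a t := by
        rw [sections_cons, List.map_flatMap]
        congr 1
        funext t
        rw [List.map_map]
        rfl
      rw [h1]
      exact flatMap_swap_perm s (List.sections LL) fun a t => simpleComm a t
    have stepD := perm_prod_mem (j := LL.length) hperm ?_
    · have harith : (s :: LL).length = 0 + 1 + rest.length := by simp [hlen]; omega
      rw [harith]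
      refine mul_inv_mem_trans stepA (mul_inv_mem_trans stepB ?_)
      rw [hflat]
      have h2 : 0 + 1 + rest.length = LL.length + 1 := by simp [hlen]; omega
      rw [h2]
      exact stepD
    · rintro x hx
      obtain ⟨a, -, hx2⟩ := List.mem_flatMap.1 hx
      obtain ⟨t, ht, rfl⟩ := List.mem_map.1 hx2
      have hlent : t.length = LL.length := List.mem_sections_length ht
      have := simpleComm_mem (k := 0) t (Subgroup.mem_top a)
      rwa [zero_add, hlent] at this

variable {H : Type*} [Group H]

lemma map_grpComm (f : G →* H) (a b : G) : f (grpComm a b) = grpComm (f a) (f b) := by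
  simp [grpComm]

lemma map_simpleComm (f : G →* H) (l : List G) :
    ∀ a : G, f (simpleComm a l) = simpleComm (f a) (l.map f) := by
  induction l with
  | nil => intro a; rfl
  | cons c l ih =>
    intro a
    rw [List.map_cons, simpleComm_cons, simpleComm_cons, ih, map_grpComm]

lemma map_simpleCommList (f : G →* H) (l : List G) :
    f (simpleCommList l) = simpleCommList (l.map f) := by
  cases l with
  | nil => simp [simpleCommList]
  | cons a l => rw [List.map_cons, simpleCommList_cons, simpleCommList_cons, map_simpleComm]

end Main

section TopLevel

/-- The list of images of the generator `xₓ` under `θᵢ`, as a list of generators. -/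
def succListAux (n : ℕ) (i : Fin n) (x : Fin n) : List (FreeGroup (Fin (n + 1))) :=
  if x < i then [FreeGroup.of x.castSucc]
  else if x = i then [FreeGroup.of i.castSucc, FreeGroup.of i.succ]
  else [FreeGroup.of x.succ]

lemma theta_of (n : ℕ) (i : Fin n) (x : Fin n) :
    theta n i (FreeGroup.of x) = (succListAux n i x).prod := by
  rw [theta, FreeGroup.lift_apply_of, succListAux]
  split_ifs <;> simp

lemma succListAux_nodup (n : ℕ) (i x : Fin n) : (succListAux n i x).Nodup := by
  rw [succListAux]
  split_ifs
  · exact List.nodup_singleton _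
  · refine List.nodup_cons.2 ⟨?_, List.nodup_singleton _⟩
    simp only [List.mem_singleton]
    intro h
    exact absurd (FreeGroup.of_injective h) (Fin.castSucc_lt_succ (i := i)).ne
  · exact List.nodup_singleton _

lemma mem_succListAux {n : ℕ} {i x : Fin n} {g : FreeGroup (Fin (n + 1))} :
    g ∈ succListAux n i x ↔ ∃ y : Fin (n + 1),
      g = FreeGroup.of y ∧
      ((x < i → y = x.castSucc) ∧ (i < x → y = x.succ) ∧
        (x = i → y = i.castSucc ∨ y = i.succ)) := by
  rw [succListAux]
  rcases lt_trichotomy x i with h | h | h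
  · rw [if_pos h]
    simp only [List.mem_singleton]
    constructor
    · rintro rfl
      exact ⟨x.castSucc, rfl, fun _ => rfl, fun h2 => absurd h2 (asymm h),
        fun h2 => absurd h2 (ne_of_lt h)⟩
    · rintro ⟨y, rfl, h1, -, -⟩
      rw [h1 h]
  · subst h
    rw [if_neg (lt_irrefl x), if_pos rfl]
    constructor
    · intro hg
      rcases List.mem_cons.1 hg with rfl | hg2
      · exact ⟨x.castSucc, rfl, fun h2 => absurd h2 (lt_irrefl x),
          fun h2 => absurd h2 (lt_irrefl x), fun _ => Or.inl rfl⟩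
      · rw [List.mem_singleton] at hg2
        subst hg2
        exact ⟨x.succ, rfl, fun h2 => absurd h2 (lt_irrefl x),
          fun h2 => absurd h2 (lt_irrefl x), fun _ => Or.inr rfl⟩
    · rintro ⟨y, rfl, -, -, h3⟩
      rcases h3 rfl with rfl | rfl
      · exact List.mem_cons_self
      · exact List.mem_cons_of_mem _ (List.mem_singleton.2 rfl)
  · rw [if_neg (asymm h), if_neg (ne_of_gt h)]
    simp only [List.mem_singleton]
    constructor
    · rintro rfl
      exact ⟨x.succ, rfl, fun h2 => absurd h2 (asymm h), fun _ => rfl,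
        fun h2 => absurd h2 (ne_of_gt h)⟩
    · rintro ⟨y, rfl, -, h2, -⟩
      rw [h2 h]

end TopLevel

/-- `θᵢ([x_{i₁}, …, x_{i_d}])` is congruent, modulo `γ_{d+1}(F_{n+1})`, to the product
of all `i`-successors `[x_{j₁}, …, x_{j_d}]` of the simple commutator
`[x_{i₁}, …, x_{i_d}]`, taken in any fixed order. -/
theorem theta_simpleCommList_mod_lowerCentralSeries
    (n : ℕ) (i : Fin n) (d : ℕ) (hd : 2 ≤ d) (idx : Fin d → Fin n)
    (l : List (Fin d → Fin (n + 1))) (hnd : l.Nodup)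
    (hmem : ∀ j : Fin d → Fin (n + 1), j ∈ l ↔ IsISuccIdx i idx j) :
    theta n i (simpleCommList (List.ofFn fun t => FreeGroup.of (idx t))) *
      ((l.map fun j => simpleCommList (List.ofFn fun t => FreeGroup.of (j t))).prod)⁻¹
      ∈ (⊤ : Subgroup (FreeGroup (Fin (n + 1)))).lowerCentralSeries d := by
  classical
  set F : (Fin d → Fin (n + 1)) → List (FreeGroup (Fin (n + 1))) :=
    fun j => List.ofFn fun t => FreeGroup.of (j t) with hF
  set LL : List (List (FreeGroup (Fin (n + 1)))) :=
    List.ofFn fun t => succListAux n i (idx t) with hLL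
  have hLLlen : LL.length = d := by simp [hLL]
  -- step 1 : θ of the commutator is the commutator of the products
  have h1 : theta n i (simpleCommList (List.ofFn fun t => FreeGroup.of (idx t))) =
      simpleCommList (LL.map List.prod) := by
    rw [map_simpleCommList, List.map_ofFn, hLL, List.map_ofFn]
    exact congrArg simpleCommList
      (congrArg List.ofFn (funext fun t => theta_of n i (idx t)))
  -- step 2 : expansion over sections
  have hne : LL ≠ [] := by
    intro h
    rw [h] at hLLlen
    simp at hLLlen
    omega
  have h2 := simpleCommList_sections_mem LL hne
  rw [hLLlen] at h2
  -- step 3 : membership characterisation of sections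
  have key : ∀ x : List (FreeGroup (Fin (n + 1))),
      x ∈ List.sections LL ↔ ∃ j, IsISuccIdx i idx j ∧ F j = x := by
    intro x
    rw [List.mem_sections, List.forall₂_iff_get]
    constructor
    · rintro ⟨hlen, hget⟩
      have hxd : x.length = d := by rw [hlen, hLLlen]
      have hy : ∀ t : Fin d, ∃ y : Fin (n + 1),
          x.get ⟨t, by rw [hxd]; exact t.isLt⟩ = FreeGroup.of y ∧
          ((idx t < i → y = (idx t).castSucc) ∧ (i < idx t → y = (idx t).succ) ∧
            (idx t = i → y = i.castSucc ∨ y = i.succ)) := by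
        intro t
        have h2' : (t : ℕ) < LL.length := by rw [hLLlen]; exact t.isLt
        have h3 := hget t (by rw [hxd]; exact t.isLt) h2'
        have h4 : LL.get ⟨t, h2'⟩ = succListAux n i (idx t) := by
          simp [hLL, List.get_ofFn]
        rw [h4] at h3
        exact mem_succListAux.1 h3
      choose jf hj1 hj2 using hy
      refine ⟨jf, fun t => hj2 t, ?_⟩
      apply List.ext_get
      · simp [hF, hxd]
      · intro m hm1 hm2
        have hmd : m < d := by
          have hfl : (F jf).length = d := by simp [hF]
          omega
        have hget2 : (F jf).get ⟨m, hm1⟩ = FreeGroup.of (jf ⟨m, hmd⟩) := by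
          simp [hF, List.get_ofFn]
        rw [hget2, ← hj1 ⟨m, hmd⟩]
    · rintro ⟨j, hj, rfl⟩
      refine ⟨by simp [hF, hLLlen], ?_⟩
      intro m hm1 hm2
      have hmd : m < d := by rwa [hLLlen] at hm2
      have h4 : LL.get ⟨m, hm2⟩ = succListAux n i (idx ⟨m, hmd⟩) := by
        simp [hLL, List.get_ofFn]
      rw [h4]
      refine mem_succListAux.2 ⟨j ⟨m, hmd⟩, ?_, hj ⟨m, hmd⟩⟩
      simp [hF, List.get_ofFn]
  -- step 4 : the two lists are permutations of each other
  have hnodup1 : (List.sections LL).Nodup := by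
    apply sections_nodup
    intro s hs
    rw [hLL, List.mem_ofFn] at hs
    obtain ⟨t, rfl⟩ := hs
    exact succListAux_nodup n i (idx t)
  have hFinj : Function.Injective F := by
    intro j j' hjj
    rw [hF] at hjj
    have := List.ofFn_injective hjj
    funext t
    exact FreeGroup.of_injective (congrFun this t)
  have hnodup2 : (l.map F).Nodup := hnd.map hFinj
  have hsets : (List.sections LL).toFinset = (l.map F).toFinset := by
    ext x
    simp only [List.mem_toFinset, List.mem_map]
    rw [key x]
    constructor
    · rintro ⟨j, hj, hfx⟩
      exact ⟨j, (hmem j).2 hj, hfx⟩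
    · rintro ⟨j, hjl, hfx⟩
      exact ⟨j, (hmem j).1 hjl, hfx⟩
  have hperm : (List.sections LL).Perm (l.map F) :=
    List.perm_of_nodup_nodup_toFinset_eq hnodup1 hnodup2 hsets
  have hperm2 : ((List.sections LL).map simpleCommList).Perm
      ((l.map F).map simpleCommList) := hperm.map _
  obtain ⟨e, rfl⟩ : ∃ e, d = e + 1 := ⟨d - 1, by omega⟩
  have h3 := perm_prod_mem (j := e) hperm2 ?_
  · rw [h1]
    refine mul_inv_mem_trans h2 ?_
    rw [List.map_map] at h3
    exact h3
  · rintro g hg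
    obtain ⟨t, ht, rfl⟩ := List.mem_map.1 hg
    have hlent : t.length = e + 1 := by
      rw [List.mem_sections_length ht, hLLlen]
    exact simpleCommList_mem t hlent
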